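/- arXiv:math/0509245 — 2 statements merged into one kernel-verified Lean document; each statement's English description precedes it below -/
import Mathlib

section
/- Let p < q be real numbers and let u be a set of pairs (pᵢ, qᵢ) ∈ ℝ × ℝ with qᵢ > 0 such that the closed interval [p,q] is contained in the union of the open balls B_{qᵢ}(pᵢ) over (pᵢ,qᵢ) ∈ u. Then there exists a finite sequence (p₁,q₁), …, (p_n,q_n) of elements of u such that |p − p₁| < q₁, |pᵢ − p_{i+1}| < qᵢ + q_{i+1} for 1 ≤ i < n, and |p_n − q| < q_n. -/
theorem chain_of_balls_covering_Icc (p q : ℝ) (hpq : p < q)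
    (u : Set (ℝ × ℝ)) (hu : ∀ z ∈ u, 0 < z.2)
    (hcov : Set.Icc p q ⊆ ⋃ z ∈ u, Set.Ioo (z.1 - z.2) (z.1 + z.2)) :
    ∃ (n : ℕ) (f : Fin (n + 1) → ℝ × ℝ),
      (∀ i, f i ∈ u) ∧
      |p - (f 0).1| < (f 0).2 ∧
      (∀ i : Fin n, |(f i.castSucc).1 - (f i.succ).1| <
        (f i.castSucc).2 + (f i.succ).2) ∧
      |(f (Fin.last n)).1 - q| < (f (Fin.last n)).2 := by
  classical
  set P : ℝ → Prop := fun x =>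
    ∃ (n : ℕ) (f : Fin (n + 1) → ℝ × ℝ),
      (∀ i, f i ∈ u) ∧
      |p - (f 0).1| < (f 0).2 ∧
      (∀ i : Fin n, |(f i.castSucc).1 - (f i.succ).1| <
        (f i.castSucc).2 + (f i.succ).2) ∧
      |(f (Fin.last n)).1 - x| < (f (Fin.last n)).2 with hP
  suffices h : P q by exact h
  -- extension lemma
  have ext : ∀ x y : ℝ, P x → ∀ z ∈ u, |z.1 - x| < z.2 → |z.1 - y| < z.2 → P y := by
    intro x y hx z hz hzx hzy
    obtain ⟨n, f, hf, h0, hmid, hlast⟩ := hx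
    refine ⟨n + 1, Fin.snoc f z, ?_, ?_, ?_, ?_⟩
    · intro i
      refine Fin.lastCases ?_ ?_ i
      · simpa using hz
      · intro j; simpa using hf j
    · have h00 : (0 : Fin (n + 2)) = Fin.castSucc (0 : Fin (n + 1)) := rfl
      rw [h00]
      simp only [Fin.snoc_castSucc]
      exact h0
    · intro i
      refine Fin.lastCases ?_ ?_ i
      · have h2 : (Fin.last n).succ = Fin.last (n + 1) := rfl
        rw [h2]
        simp only [Fin.snoc_castSucc, Fin.snoc_last]
        have htri : |(f (Fin.last n)).1 - z.1|
            ≤ |(f (Fin.last n)).1 - x| + |x - z.1| := abs_sub_le _ _ _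
        rw [abs_sub_comm x z.1] at htri
        linarith
      · intro j
        simp only [Fin.succ_castSucc, Fin.snoc_castSucc]
        exact hmid j
    · simp only [Fin.snoc_last]; exact hzy
  -- the set of reachable points
  set T : Set ℝ := {x | x ∈ Set.Icc p q ∧ P x} with hT
  have hpT : p ∈ T := by
    have hm := hcov (Set.mem_Icc.mpr ⟨le_refl p, le_of_lt hpq⟩)
    rw [Set.mem_iUnion₂] at hm
    obtain ⟨z, hz, hzp⟩ := hm
    obtain ⟨hzp1, hzp2⟩ := hzp
    refine ⟨Set.mem_Icc.mpr ⟨le_refl p, le_of_lt hpq⟩, 0, fun _ => z, fun _ => hz, ?_, ?_, ?_⟩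
    · rw [abs_sub_lt_iff]; constructor <;> linarith
    · exact fun i => i.elim0
    · rw [abs_sub_lt_iff]; constructor <;> linarith
  have hbdd : BddAbove T := ⟨q, fun x hx => hx.1.2⟩
  have hTne : T.Nonempty := ⟨p, hpT⟩
  set c := sSup T with hc
  have hcT1 : p ≤ c := le_csSup hbdd hpT
  have hcT2 : c ≤ q := csSup_le hTne fun x hx => hx.1.2
  have hm := hcov (Set.mem_Icc.mpr ⟨hcT1, hcT2⟩)
  rw [Set.mem_iUnion₂] at hm
  obtain ⟨z, hz, hzc1, hzc2⟩ := hm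
  obtain ⟨x, hxT, hxgt⟩ := exists_lt_of_lt_csSup hTne hzc1
  have hxle : x ≤ c := le_csSup hbdd hxT
  have hzx : |z.1 - x| < z.2 := by
    rw [abs_sub_lt_iff]; constructor <;> linarith
  by_cases hq : q < z.1 + z.2
  · have hzq : |z.1 - q| < z.2 := by
      rw [abs_sub_lt_iff]; constructor <;> linarith
    exact ext x q hxT.2 z hz hzx hzq
  · exfalso
    push_neg at hq
    set y := (c + (z.1 + z.2)) / 2 with hy
    have hcy : c < y := by simp only [hy]; linarith
    have hylt : y < z.1 + z.2 := by simp only [hy]; linarith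
    have hzy : |z.1 - y| < z.2 := by
      rw [abs_sub_lt_iff]; constructor <;> linarith
    have hyT : y ∈ T := by
      refine ⟨Set.mem_Icc.mpr ⟨by linarith, by linarith⟩, ext x y hxT.2 z hz hzx hzy⟩
    have := le_csSup hbdd hyT
    linarith
end

section
/- Let X ⊆ ℝ, let D ⊆ X be dense in X (i.e., X is contained in the closure of D), and let f : X → ℝ be a function such that for every s ∈ X and every sequence (s_n) of elements of D converging to s, f(s_n) → f(s). Then f is continuous on X (in the subspace topology). -/
open Filter Topology

/- A sequence converging to `s` within `D` lies in `D` from some index on, so a shift of it is a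
sequence of points of `D`. -/
theorem tendsto_nhdsWithin_of_seq_tendsto {X Y : Type*} [TopologicalSpace X]
    [FirstCountableTopology X] {f : X → Y} {l : Filter Y} {D : Set X} {s : X}
    (h : ∀ u : ℕ → X, (∀ n, u n ∈ D) → Tendsto u atTop (𝓝 s) →
      Tendsto (fun n => f (u n)) atTop l) :
    Tendsto f (𝓝[D] s) l := by
  refine tendsto_of_seq_tendsto fun u hu => ?_
  obtain ⟨hus, huD⟩ := tendsto_nhdsWithin_iff.mp hu
  obtain ⟨N, hN⟩ := eventually_atTop.mp huD
  rw [← tendsto_add_atTop_iff_nat N]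
  exact h (fun n => u (n + N)) (fun n => hN _ (Nat.le_add_left N n))
    ((tendsto_add_atTop_iff_nat N).mpr hus)

theorem continuousOn_of_tendsto_nhdsWithin_of_subset_closure {X Y : Type*} [TopologicalSpace X]
    [TopologicalSpace Y] [T3Space Y] {f : X → Y} {A B : Set X} (hB : B ⊆ closure A)
    (hf : ∀ x ∈ B, Tendsto f (𝓝[A] x) (𝓝 (f x))) :
    ContinuousOn f B :=
  (continuousOn_extendFrom hB fun x hx => ⟨f x, hf x hx⟩).congr fun x hx =>
    (extendFrom_eq (hB hx) (hf x hx)).symm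

theorem continuousOn_of_seq_continuity_on_dense_general (X D : Set ℝ)
    (hdense : X ⊆ closure D) (f : ℝ → ℝ)
    (hf : ∀ s ∈ X, ∀ u : ℕ → ℝ, (∀ n, u n ∈ D) →
      Tendsto u atTop (nhds s) → Tendsto (fun n => f (u n)) atTop (nhds (f s))) :
    ContinuousOn f X :=
  continuousOn_of_tendsto_nhdsWithin_of_subset_closure hdense fun s hs =>
    tendsto_nhdsWithin_of_seq_tendsto (hf s hs)

theorem continuousOn_of_seq_continuity_on_dense (X D : Set ℝ)
    (hDX : D ⊆ X) (hdense : X ⊆ closure D) (f : ℝ → ℝ)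
    (hf : ∀ s ∈ X, ∀ u : ℕ → ℝ, (∀ n, u n ∈ D) →
      Tendsto u atTop (nhds s) → Tendsto (fun n => f (u n)) atTop (nhds (f s))) :
    ContinuousOn f X :=
  continuousOn_of_seq_continuity_on_dense_general X D hdense f hf
end
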